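/- Let Y₁ < Y₂ < ... < Yₘ partition ℝ into intervals I₀ = (-∞,Y₁), Iᵢ = (Yᵢ,Yᵢ₊₁) for 1 ≤ i ≤ m-1, and Iₘ = (Yₘ,∞), and let X₁,...,Xₙ be points avoiding {Y₁,...,Yₘ}. Let nᵢ = |{X : X ∈ Iᵢ}|, k₁ = #{1 ≤ i ≤ m-1 : nᵢ > 1}, k₂ = #{1 ≤ i ≤ m-1 : nᵢ = 1}, k₃ = #{i ∈ {0,m} : nᵢ > 0}. Then for any r ≥ 1, c ∈ [0,1], the domination number γ of the PICD satisfies max(k₃, 1(n>0)) ≤ γ ≤ 2k₁ + k₂ + k₃ ≤ min(n, 2m). -/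

import Mathlib

/-!
Each proximity region `NM Y r c x` stays inside the interval of `x`, so a dominating set must
contain a point of every nonempty end interval. Conversely, the region of `x` is attached to one
endpoint `Y` of its interval and, as `r ≥ 1`, covers everything between `x` and that endpoint:
the outermost point of an end interval dominates the whole interval, and in a middle interval
the last point before the centre and the first point after it dominate the points on their
respective sides. This yields a dominating set with `min 1 nᵢ` points in each end interval and
`min 2 nᵢ` points in each middle interval.
-/

open Set
open scoped Classical

/-- The parameterized proximity region for the intervalization of `ℝ` by the points
`Y 0 < Y 1 < … < Y (m-1)`: for `x` strictly between two consecutive `Y` values the region is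
the parameterized proximity region inside that interval with relative center `c`; for `x`
in an end interval it is `(Y₍₁₎ - r(Y₍₁₎ - x), Y₍₁₎)` resp. `(Y₍ₘ₎, Y₍ₘ₎ + r(x - Y₍ₘ₎))`;
and `N(y) = {y}` for `y` among the `Y` values. -/
noncomputable def NM {m : ℕ} (Y : Fin m → ℝ) (r c x : ℝ) : Set ℝ :=
  if x ∈ Set.range Y then {x}
  else if hB : (Finset.univ.filter fun i => Y i < x).Nonempty then
    (let l := (Finset.univ.filter fun i => Y i < x).sup' hB Y
     if hA : (Finset.univ.filter fun i => x < Y i).Nonempty then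
       let u := (Finset.univ.filter fun i => x < Y i).inf' hA Y
       if x < l + c * (u - l) then Set.Ioo l (min u (l + r * (x - l)))
       else Set.Ioo (max l (u - r * (u - x))) u
     else Set.Ioo l (l + r * (x - l)))
  else if hA : (Finset.univ.filter fun i => x < Y i).Nonempty then
    let u := (Finset.univ.filter fun i => x < Y i).inf' hA Y
    Set.Ioo (u - r * (u - x)) u
  else ∅

/-- The domination number of the digraph on vertices `X 0, …, X (n-1)` where `u` dominates
itself and every vertex lying in `N u`. -/
noncomputable def domNum (n : ℕ) (X : Fin n → ℝ) (N : ℝ → Set ℝ) : ℕ :=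
  sInf {k | ∃ S : Finset (Fin n), S.card = k ∧
    ∀ j, ∃ i ∈ S, X j = X i ∨ X j ∈ N (X i)}

open Finset

def Dominates (N : ℝ → Set ℝ) (x y : ℝ) : Prop := y = x ∨ y ∈ N x

def IsDominatingSet {n : ℕ} (X : Fin n → ℝ) (N : ℝ → Set ℝ) (S : Finset (Fin n)) : Prop :=
  ∀ j, ∃ i ∈ S, Dominates N (X i) (X j)

lemma Dominates.of_ne {N : ℝ → Set ℝ} {x y : ℝ} (h : y ≠ x → y ∈ N x) : Dominates N x y :=
  (eq_or_ne y x).imp_right h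

section Domination

variable {n : ℕ} {X : Fin n → ℝ} {N : ℝ → Set ℝ} {S : Finset (Fin n)}

lemma isDominatingSet_univ : IsDominatingSet X N univ :=
  fun j => ⟨j, mem_univ j, Or.inl rfl⟩

lemma domNum_le_card (hS : IsDominatingSet X N S) : domNum n X N ≤ #S :=
  Nat.sInf_le ⟨S, rfl, hS⟩

lemma le_domNum {k : ℕ} (h : ∀ S, IsDominatingSet X N S → k ≤ #S) : k ≤ domNum n X N :=
  le_csInf ⟨n, univ, card_fin n, isDominatingSet_univ⟩ fun _ ⟨S, hS, hdom⟩ => hS ▸ h S hdom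

lemma IsDominatingSet.nonempty (hS : IsDominatingSet X N S) (hn : 0 < n) : S.Nonempty :=
  let ⟨i, hi, _⟩ := hS ⟨0, hn⟩
  ⟨i, hi⟩

lemma IsDominatingSet.min_one_card_le (hS : IsDominatingSet X N S) (p : ℝ → Prop)
    [DecidablePred p] (hp : ∀ x, ¬ p x → ∀ y ∈ N x, ¬ p y) :
    min 1 #{j | p (X j)} ≤ #{i ∈ S | p (X i)} := by
  rcases Nat.eq_zero_or_pos #{j | p (X j)} with h | h
  · simp [h]
  obtain ⟨j, hj⟩ := card_pos.1 h
  obtain ⟨i, hiS, hij⟩ := hS j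
  have hi : p (X i) := by
    by_contra hi
    rcases hij with h | h
    · exact hi (h ▸ (mem_filter.1 hj).2)
    · exact hp _ hi _ h (mem_filter.1 hj).2
  exact (min_le_left _ _).trans (card_pos.2 ⟨i, mem_filter.2 ⟨hiS, hi⟩⟩)

end Domination

lemma Finset.exists_card_le_min_one_of_forall_le_imp {ι β : Type*} [LinearOrder β]
    (F : Finset ι) (f : ι → β) {P : ι → ι → Prop} (hP : ∀ i ∈ F, ∀ j ∈ F, f i ≤ f j → P i j) :
    ∃ T : Finset ι, #T ≤ min 1 #F ∧ ∀ j ∈ F, ∃ i ∈ T, P i j := by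
  rcases F.eq_empty_or_nonempty with rfl | hF
  · exact ⟨∅, by simp, by simp⟩
  obtain ⟨i, hi, hmin⟩ := F.exists_min_image f hF
  refine ⟨{i}, ?_, fun j hj => ⟨i, mem_singleton_self i, hP i hi j hj (hmin j hj)⟩⟩
  simpa using hF.card_pos

lemma sum_min_two_eq {ι : Type*} (s : Finset ι) (f : ι → ℕ) :
    ∑ i ∈ s, min 2 (f i) = 2 * #{i ∈ s | 1 < f i} + #{i ∈ s | f i = 1} := by
  rw [card_filter, card_filter, mul_sum, ← sum_add_distrib]
  refine sum_congr rfl fun i _ => ?_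
  split_ifs <;> omega

section Intervalization

variable {m : ℕ} {Y : Fin (m + 1) → ℝ} {x : ℝ}

lemma exists_mem_Ioo_of_notMem_range (hx : x ∉ range Y) (h0 : Y 0 < x)
    (hl : x < Y (Fin.last m)) : ∃ i : Fin m, x ∈ Ioo (Y i.castSucc) (Y i.succ) := by
  set k := (univ.filter fun j => Y j < x).max' ⟨0, by simpa using h0⟩
  have hk : Y k < x := (mem_filter.1 (max'_mem (univ.filter fun j => Y j < x) _)).2
  have hk_last : k ≠ Fin.last m := fun h => (h ▸ hk).not_gt hl
  set i := k.castPred hk_last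
  have hik : i.castSucc = k := Fin.castSucc_castPred k hk_last
  refine ⟨i, hik ▸ hk, lt_of_not_ge fun h => ?_⟩
  have hlt : Y i.succ < x := h.lt_of_ne fun he => hx ⟨_, he⟩
  have hle : i.succ ≤ k := le_max' _ _ (by simpa using hlt)
  rw [← hik] at hle
  exact Fin.castSucc_lt_succ.not_ge hle

lemma lt_or_lt_or_exists_mem_Ioo (hx : x ∉ range Y) :
    x < Y 0 ∨ Y (Fin.last m) < x ∨ ∃ i : Fin m, x ∈ Ioo (Y i.castSucc) (Y i.succ) := by
  rcases lt_trichotomy x (Y 0) with h0 | h0 | h0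
  · exact Or.inl h0
  · exact absurd ⟨0, h0.symm⟩ hx
  rcases lt_trichotomy x (Y (Fin.last m)) with hl | hl | hl
  · exact Or.inr (Or.inr (exists_mem_Ioo_of_notMem_range hx h0 hl))
  · exact absurd ⟨_, hl.symm⟩ hx
  · exact Or.inr (Or.inl hl)

lemma disjoint_Ioo_castSucc_succ (hY : Monotone Y) {i i' : Fin m} (h : i ≠ i') :
    Disjoint (Ioo (Y i.castSucc) (Y i.succ)) (Ioo (Y i'.castSucc) (Y i'.succ)) := by
  have key {i i' : Fin m} (h : i < i') :
      Disjoint (Ioo (Y i.castSucc) (Y i.succ)) (Ioo (Y i'.castSucc) (Y i'.succ)) :=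
    Set.Ioo_disjoint_Ioo.2
      ((min_le_left _ _).trans ((hY (Fin.succ_le_castSucc_iff.2 h)).trans (le_max_right _ _)))
  exact h.lt_or_gt.elim key fun h => (key h).symm

lemma sup'_filter_lt_eq {k : Fin (m + 1)} (hk : Y k < x) (hmax : ∀ j, Y j < x → Y j ≤ Y k)
    (h : (univ.filter fun j => Y j < x).Nonempty) :
    (univ.filter fun j => Y j < x).sup' h Y = Y k :=
  le_antisymm (sup'_le _ _ fun j hj => hmax j (mem_filter.1 hj).2) (le_sup' Y (by simpa using hk))

lemma inf'_filter_gt_eq {k : Fin (m + 1)} (hk : x < Y k) (hmin : ∀ j, x < Y j → Y k ≤ Y j)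
    (h : (univ.filter fun j => x < Y j).Nonempty) :
    (univ.filter fun j => x < Y j).inf' h Y = Y k :=
  le_antisymm (inf'_le Y (by simpa using hk)) (le_inf' _ _ fun j hj => hmin j (mem_filter.1 hj).2)

variable {r c : ℝ}

lemma NM_of_lt_first (hY : Monotone Y) (hx : x < Y 0) :
    NM Y r c x = Ioo (Y 0 - r * (Y 0 - x)) (Y 0) := by
  have hle (j : Fin (m + 1)) : Y 0 ≤ Y j := hY (Fin.zero_le j)
  have hB : ¬ (univ.filter fun j => Y j < x).Nonempty := fun ⟨j, hj⟩ =>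
    ((mem_filter.1 hj).2.trans hx).not_ge (hle j)
  have hA : (univ.filter fun j => x < Y j).Nonempty := ⟨0, by simpa using hx⟩
  rw [NM, if_neg fun ⟨j, hj⟩ => (hj ▸ hx).not_ge (hle j), dif_neg hB, dif_pos hA,
    inf'_filter_gt_eq hx fun j _ => hle j]

lemma NM_of_last_lt (hY : Monotone Y) (hx : Y (Fin.last m) < x) :
    NM Y r c x = Ioo (Y (Fin.last m)) (Y (Fin.last m) + r * (x - Y (Fin.last m))) := by
  have hle (j : Fin (m + 1)) : Y j ≤ Y (Fin.last m) := hY (Fin.le_last j)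
  have hA : ¬ (univ.filter fun j => x < Y j).Nonempty := fun ⟨j, hj⟩ =>
    (hx.trans (mem_filter.1 hj).2).not_ge (hle j)
  have hB : (univ.filter fun j => Y j < x).Nonempty := ⟨Fin.last m, by simpa using hx⟩
  rw [NM, if_neg fun ⟨j, hj⟩ => (hj ▸ hx).not_ge (hle j), dif_pos hB, dif_neg hA]
  simp only [sup'_filter_lt_eq hx fun j _ => hle j]

lemma NM_of_mem_Ioo (hY : StrictMono Y) {i : Fin m} (hx : x ∈ Ioo (Y i.castSucc) (Y i.succ)) :
    NM Y r c x =
      if x < Y i.castSucc + c * (Y i.succ - Y i.castSucc) then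
        Ioo (Y i.castSucc) (min (Y i.succ) (Y i.castSucc + r * (x - Y i.castSucc)))
      else Ioo (max (Y i.castSucc) (Y i.succ - r * (Y i.succ - x))) (Y i.succ) := by
  obtain ⟨hl, hu⟩ := hx
  have hnr : x ∉ range Y := by
    rintro ⟨j, rfl⟩
    exact (Fin.castSucc_lt_iff_succ_le.1 (hY.lt_iff_lt.1 hl)).not_gt (hY.lt_iff_lt.1 hu)
  have hsup : ∀ j, Y j < x → Y j ≤ Y i.castSucc := fun j hj =>
    hY.monotone (Fin.le_castSucc_iff.2 (hY.lt_iff_lt.1 (hj.trans hu)))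
  have hinf : ∀ j, x < Y j → Y i.succ ≤ Y j := fun j hj =>
    hY.monotone (Fin.castSucc_lt_iff_succ_le.1 (hY.lt_iff_lt.1 (hl.trans hj)))
  have hB : (univ.filter fun j => Y j < x).Nonempty := ⟨i.castSucc, by simpa using hl⟩
  have hA : (univ.filter fun j => x < Y j).Nonempty := ⟨i.succ, by simpa using hu⟩
  rw [NM, if_neg hnr, dif_pos hB, dif_pos hA]
  simp only [sup'_filter_lt_eq hl hsup, inf'_filter_gt_eq hu hinf]

lemma NM_subset_Ioo (hY : StrictMono Y) {i : Fin m} (hx : x ∈ Ioo (Y i.castSucc) (Y i.succ)) :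
    NM Y r c x ⊆ Ioo (Y i.castSucc) (Y i.succ) := by
  rw [NM_of_mem_Ioo hY hx]
  split_ifs
  · exact Ioo_subset_Ioo_right (min_le_left _ _)
  · exact Ioo_subset_Ioo_left (le_max_left _ _)

lemma first_le_of_mem_NM (hY : StrictMono Y) (hx : Y 0 ≤ x) {y : ℝ} (hy : y ∈ NM Y r c x) :
    Y 0 ≤ y := by
  by_cases hxr : x ∈ range Y
  · rw [NM, if_pos hxr, mem_singleton_iff] at hy
    exact hy ▸ hx
  rcases lt_or_lt_or_exists_mem_Ioo hxr with h | h | ⟨i, hi⟩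
  · exact absurd h hx.not_gt
  · rw [NM_of_last_lt hY.monotone h] at hy
    exact (hY.monotone (Fin.zero_le _)).trans hy.1.le
  · exact (hY.monotone (Fin.zero_le _)).trans (NM_subset_Ioo hY hi hy).1.le

lemma le_last_of_mem_NM (hY : StrictMono Y) (hx : x ≤ Y (Fin.last m)) {y : ℝ}
    (hy : y ∈ NM Y r c x) : y ≤ Y (Fin.last m) := by
  by_cases hxr : x ∈ range Y
  · rw [NM, if_pos hxr, mem_singleton_iff] at hy
    exact hy ▸ hx
  rcases lt_or_lt_or_exists_mem_Ioo hxr with h | h | ⟨i, hi⟩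
  · rw [NM_of_lt_first hY.monotone h] at hy
    exact hy.2.le.trans (hY.monotone (Fin.zero_le _))
  · exact absurd h hx.not_gt
  · exact (NM_subset_Ioo hY hi hy).2.le.trans (hY.monotone (Fin.le_last _))

variable {y : ℝ}

lemma dominates_of_lt_first (hY : Monotone Y) (hr : 1 ≤ r) (hx : x < Y 0) (hxy : x ≤ y)
    (hy : y < Y 0) : Dominates (NM Y r c) x y := by
  refine Dominates.of_ne fun hne => ?_
  rw [NM_of_lt_first hY hx]
  exact ⟨by nlinarith [hxy.lt_of_ne hne.symm], hy⟩

lemma dominates_of_last_lt (hY : Monotone Y) (hr : 1 ≤ r) (hx : Y (Fin.last m) < x)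
    (hyx : y ≤ x) (hy : Y (Fin.last m) < y) : Dominates (NM Y r c) x y := by
  refine Dominates.of_ne fun hne => ?_
  rw [NM_of_last_lt hY hx]
  exact ⟨hy, by nlinarith [hyx.lt_of_ne hne]⟩

lemma dominates_of_lt_center (hY : StrictMono Y) (hr : 1 ≤ r) {i : Fin m}
    (hx : x ∈ Ioo (Y i.castSucc) (Y i.succ))
    (hxc : x < Y i.castSucc + c * (Y i.succ - Y i.castSucc))
    (hy : y ∈ Ioo (Y i.castSucc) (Y i.succ)) (hyx : y ≤ x) : Dominates (NM Y r c) x y := by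
  refine Dominates.of_ne fun hne => ?_
  rw [NM_of_mem_Ioo hY hx, if_pos hxc]
  exact ⟨hy.1, lt_min hy.2 (by nlinarith [hyx.lt_of_ne hne, hx.1])⟩

lemma dominates_of_center_le (hY : StrictMono Y) (hr : 1 ≤ r) {i : Fin m}
    (hx : x ∈ Ioo (Y i.castSucc) (Y i.succ))
    (hxc : ¬ x < Y i.castSucc + c * (Y i.succ - Y i.castSucc))
    (hy : y ∈ Ioo (Y i.castSucc) (Y i.succ)) (hxy : x ≤ y) : Dominates (NM Y r c) x y := by
  refine Dominates.of_ne fun hne => ?_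
  rw [NM_of_mem_Ioo hY hx, if_neg hxc]
  exact ⟨max_lt hy.1 (by nlinarith [hxy.lt_of_ne hne.symm, hx.2]), hy.2⟩

end Intervalization

section Bounds

variable {m n : ℕ} {Y : Fin (m + 1) → ℝ} {r c : ℝ} {X : Fin n → ℝ}

lemma min_one_add_min_one_le_card (hY : StrictMono Y) {S : Finset (Fin n)}
    (hS : IsDominatingSet X (NM Y r c) S) :
    min 1 #{j | X j < Y 0} + min 1 #{j | Y (Fin.last m) < X j} ≤ #S := by
  have hL := hS.min_one_card_le (· < Y 0) fun x hx y hy =>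
    not_lt.2 (first_le_of_mem_NM hY (not_lt.1 hx) hy)
  have hR := hS.min_one_card_le (Y (Fin.last m) < ·) fun x hx y hy =>
    not_lt.2 (le_last_of_mem_NM hY (not_lt.1 hx) hy)
  have hdisj : Disjoint {i ∈ S | X i < Y 0} {i ∈ S | Y (Fin.last m) < X i} :=
    disjoint_filter.2 fun i _ h h' => (h'.trans h).not_ge (hY.monotone (Fin.zero_le _))
  calc _ ≤ #{i ∈ S | X i < Y 0} + #{i ∈ S | Y (Fin.last m) < X i} := add_le_add hL hR
    _ = #({i ∈ S | X i < Y 0} ∪ {i ∈ S | Y (Fin.last m) < X i}) :=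
      (card_union_of_disjoint hdisj).symm
    _ ≤ #S := card_le_card (union_subset (filter_subset _ _) (filter_subset _ _))

lemma exists_dominating_lt_first (hY : Monotone Y) (hr : 1 ≤ r) (X : Fin n → ℝ) :
    ∃ T : Finset (Fin n), #T ≤ min 1 #{j | X j < Y 0} ∧
      ∀ j, X j < Y 0 → ∃ i ∈ T, Dominates (NM Y r c) (X i) (X j) := by
  obtain ⟨T, hT, hdom⟩ := exists_card_le_min_one_of_forall_le_imp {j | X j < Y 0} X
    (P := fun i j => Dominates (NM Y r c) (X i) (X j)) fun i hi j hj hij =>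
      dominates_of_lt_first hY hr (mem_filter.1 hi).2 hij (mem_filter.1 hj).2
  exact ⟨T, hT, fun j hj => hdom j (by simpa using hj)⟩

lemma exists_dominating_last_lt (hY : Monotone Y) (hr : 1 ≤ r) (X : Fin n → ℝ) :
    ∃ T : Finset (Fin n), #T ≤ min 1 #{j | Y (Fin.last m) < X j} ∧
      ∀ j, Y (Fin.last m) < X j → ∃ i ∈ T, Dominates (NM Y r c) (X i) (X j) := by
  obtain ⟨T, hT, hdom⟩ := exists_card_le_min_one_of_forall_le_imp {j | Y (Fin.last m) < X j}
    (fun j => OrderDual.toDual (X j)) (P := fun i j => Dominates (NM Y r c) (X i) (X j))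
    fun i hi j hj hij =>
      dominates_of_last_lt hY hr (mem_filter.1 hi).2 (OrderDual.toDual_le_toDual.1 hij)
        (mem_filter.1 hj).2
  exact ⟨T, hT, fun j hj => hdom j (by simpa using hj)⟩

lemma exists_dominating_mem_Ioo (hY : StrictMono Y) (hr : 1 ≤ r) (X : Fin n → ℝ) (i : Fin m) :
    ∃ T : Finset (Fin n), #T ≤ min 2 #{j | X j ∈ Ioo (Y i.castSucc) (Y i.succ)} ∧
      ∀ j, X j ∈ Ioo (Y i.castSucc) (Y i.succ) → ∃ a ∈ T, Dominates (NM Y r c) (X a) (X j) := by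
  set s : Finset (Fin n) := {j | X j ∈ Ioo (Y i.castSucc) (Y i.succ)}
  set M := Y i.castSucc + c * (Y i.succ - Y i.castSucc)
  obtain ⟨A, hA, hdomA⟩ := exists_card_le_min_one_of_forall_le_imp {j ∈ s | X j < M}
    (fun j => OrderDual.toDual (X j)) (P := fun a j => Dominates (NM Y r c) (X a) (X j))
    fun a ha j hj hij => by
      simp only [s, mem_filter, Finset.mem_univ, true_and] at ha hj
      exact dominates_of_lt_center hY hr ha.1 ha.2 hj.1 (OrderDual.toDual_le_toDual.1 hij)
  obtain ⟨B, hB, hdomB⟩ := exists_card_le_min_one_of_forall_le_imp {j ∈ s | ¬ X j < M} X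
    (P := fun b j => Dominates (NM Y r c) (X b) (X j)) fun b hb j hj hij => by
      simp only [s, mem_filter, Finset.mem_univ, true_and] at hb hj
      exact dominates_of_center_le hY hr hb.1 hb.2 hj.1 hij
  have hsplit := card_filter_add_card_filter_not (s := s) (fun j => X j < M)
  refine ⟨A ∪ B, by have := card_union_le A B; omega, fun j hj => ?_⟩
  by_cases hjM : X j < M
  · obtain ⟨a, ha, hd⟩ := hdomA j (mem_filter.2 ⟨mem_filter.2 ⟨mem_univ j, hj⟩, hjM⟩)
    exact ⟨a, mem_union_left _ ha, hd⟩
  · obtain ⟨b, hb, hd⟩ := hdomB j (mem_filter.2 ⟨mem_filter.2 ⟨mem_univ j, hj⟩, hjM⟩)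
    exact ⟨b, mem_union_right _ hb, hd⟩

lemma domNum_NM_le (hY : StrictMono Y) (hr : 1 ≤ r) (hXY : ∀ j, X j ∉ range Y) :
    domNum n X (NM Y r c) ≤ min 1 #{j | X j < Y 0} + min 1 #{j | Y (Fin.last m) < X j} +
      ∑ i : Fin m, min 2 #{j | X j ∈ Ioo (Y i.castSucc) (Y i.succ)} := by
  obtain ⟨L, hL, hdomL⟩ := exists_dominating_lt_first (c := c) hY.monotone hr X
  obtain ⟨R, hR, hdomR⟩ := exists_dominating_last_lt (c := c) hY.monotone hr X
  choose T hT hdomT using exists_dominating_mem_Ioo (c := c) hY hr X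
  have hdom : IsDominatingSet X (NM Y r c) (L ∪ R ∪ univ.biUnion T) := fun j => by
    rcases lt_or_lt_or_exists_mem_Ioo (hXY j) with h | h | ⟨i, hi⟩
    · obtain ⟨a, ha, hd⟩ := hdomL j h
      exact ⟨a, by simp [ha], hd⟩
    · obtain ⟨a, ha, hd⟩ := hdomR j h
      exact ⟨a, by simp [ha], hd⟩
    · obtain ⟨a, ha, hd⟩ := hdomT i j hi
      exact ⟨a, mem_union_right _ (mem_biUnion.2 ⟨i, mem_univ i, ha⟩), hd⟩
  calc domNum n X (NM Y r c) ≤ #(L ∪ R ∪ univ.biUnion T) := domNum_le_card hdom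
    _ ≤ #L + #R + ∑ i, #(T i) :=
      (Finset.card_union_le _ _).trans (add_le_add (Finset.card_union_le _ _) card_biUnion_le)
    _ ≤ _ := add_le_add (add_le_add hL hR) (sum_le_sum fun i _ => hT i)

lemma card_lt_first_add_card_last_lt_add_sum_card_mem_Ioo_le (hY : Monotone Y) (X : Fin n → ℝ) :
    #{j | X j < Y 0} + #{j | Y (Fin.last m) < X j} +
      ∑ i : Fin m, #{j | X j ∈ Ioo (Y i.castSucc) (Y i.succ)} ≤ n := by
  set L : Finset (Fin n) := {j | X j < Y 0}
  set R : Finset (Fin n) := {j | Y (Fin.last m) < X j}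
  set T : Fin m → Finset (Fin n) := fun i => {j | X j ∈ Ioo (Y i.castSucc) (Y i.succ)}
  have hT : #(univ.biUnion T) = ∑ i, #(T i) := card_biUnion fun i _ i' _ h =>
    disjoint_filter.2 fun j _ hj => Set.disjoint_left.1 (disjoint_Ioo_castSucc_succ hY h) hj
  have hLR : Disjoint L R :=
    disjoint_filter.2 fun j _ h h' => (h'.trans h).not_ge (hY (Fin.zero_le _))
  have hLRT : Disjoint (L ∪ R) (univ.biUnion T) := by
    simp only [L, R, T, Finset.disjoint_left, Finset.mem_union, Finset.mem_filter,
      Finset.mem_biUnion, Finset.mem_univ, true_and, Set.mem_Ioo]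
    rintro j (h | h) ⟨i, hi, hi'⟩
    · exact (hY (Fin.zero_le i.castSucc)).not_gt (hi.trans h)
    · exact (hY (Fin.le_last i.succ)).not_gt (h.trans hi')
  rw [← hT, ← card_union_of_disjoint hLR, ← card_union_of_disjoint hLRT]
  exact card_le_univ _ |>.trans_eq (Fintype.card_fin n)

end Bounds

theorem picd_domNum_multi_bounds_general (m n : ℕ) (Y : Fin (m+1) → ℝ) (hY : StrictMono Y)
    (X : Fin n → ℝ) (hXY : ∀ i j, X i ≠ Y j) (r c : ℝ) (hr : 1 ≤ r) :
    let cnt : Fin m → ℕ := fun i =>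
      (Finset.univ.filter fun j =>
        X j ∈ Set.Ioo (Y i.castSucc) (Y i.succ)).card
    let k₁ := (Finset.univ.filter fun i : Fin m => 1 < cnt i).card
    let k₂ := (Finset.univ.filter fun i : Fin m => cnt i = 1).card
    let n₀ := (Finset.univ.filter fun j => X j < Y 0).card
    let nm := (Finset.univ.filter fun j => Y (Fin.last m) < X j).card
    let k₃ := (if 0 < n₀ then 1 else 0) + (if 0 < nm then 1 else 0)
    let γ := domNum n X (NM Y r c)
    max k₃ (if 0 < n then 1 else 0) ≤ γ ∧
      γ ≤ 2 * k₁ + k₂ + k₃ ∧ 2 * k₁ + k₂ + k₃ ≤ min n (2 * (m + 1)) := by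
  intro cnt k₁ k₂ n₀ nm k₃ γ
  have hk₃ : k₃ = min 1 n₀ + min 1 nm := by simp only [k₃]; split_ifs <;> omega
  have hk : 2 * k₁ + k₂ = ∑ i, min 2 (cnt i) := (sum_min_two_eq univ cnt).symm
  have hcount : n₀ + nm + ∑ i, cnt i ≤ n :=
    card_lt_first_add_card_last_lt_add_sum_card_mem_Ioo_le hY.monotone X
  have hmid : ∑ i, min 2 (cnt i) ≤ min (∑ i, cnt i) (2 * m) := le_min
    (sum_le_sum fun i _ => min_le_right _ _)
    ((sum_le_sum fun i _ => min_le_left _ _).trans_eq (by simp [mul_comm]))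
  refine ⟨max_le (hk₃ ▸ le_domNum fun S hS => min_one_add_min_one_le_card hY hS) ?_, ?_, ?_⟩
  · split_ifs with hn
    · exact le_domNum fun S hS => card_pos.2 (hS.nonempty hn)
    · exact Nat.zero_le _
  · rw [hk, hk₃, add_comm]
    exact domNum_NM_le hY hr fun j ⟨k, hk⟩ => hXY j k hk.symm
  · omega

/-- Bounds on the domination number of the multiple-interval PICD.  Here the
`m+1` points `Y 0 < … < Y m` (so `m+1 ≥ 1` points, `m` middle intervals) intervalize `ℝ`,
the `X` points avoid the `Y` values, and with `k₁, k₂` the numbers of middle intervals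
containing more than one resp. exactly one `X` point and `k₃` the number of nonempty end
intervals, `max(k₃, 1(n>0)) ≤ γ ≤ 2k₁ + k₂ + k₃ ≤ min(n, 2(m+1))`. -/
theorem picd_domNum_multi_bounds (m n : ℕ) (Y : Fin (m+1) → ℝ) (hY : StrictMono Y)
    (X : Fin n → ℝ) (hXY : ∀ i j, X i ≠ Y j) (r c : ℝ) (hr : 1 ≤ r)
    (hc : c ∈ Set.Icc (0:ℝ) 1) :
    let cnt : Fin m → ℕ := fun i =>
      (Finset.univ.filter fun j =>
        X j ∈ Set.Ioo (Y i.castSucc) (Y i.succ)).card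
    let k₁ := (Finset.univ.filter fun i : Fin m => 1 < cnt i).card
    let k₂ := (Finset.univ.filter fun i : Fin m => cnt i = 1).card
    let n₀ := (Finset.univ.filter fun j => X j < Y 0).card
    let nm := (Finset.univ.filter fun j => Y (Fin.last m) < X j).card
    let k₃ := (if 0 < n₀ then 1 else 0) + (if 0 < nm then 1 else 0)
    let γ := domNum n X (NM Y r c)
    max k₃ (if 0 < n then 1 else 0) ≤ γ ∧
      γ ≤ 2 * k₁ + k₂ + k₃ ∧ 2 * k₁ + k₂ + k₃ ≤ min n (2 * (m + 1)) :=
  picd_domNum_multi_bounds_general m n Y hY X hXY r c hr
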